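/- Let 0 < p < q and let P ⊂ ℝ^d be finite. Any 1-spanner of the p-power metric on P is a 1-spanner of the q-power metric on P: if E is a set of pairs of points of P such that the shortest-path distance in the graph (P, E) with edge weights ‖u − v‖^p equals d_p(a,b) for all a, b ∈ P, then the shortest-path distance in the graph (P, E) with edge weights ‖u − v‖^q equals d_q(a,b) for all a, b ∈ P. -/

import Mathlib

/-!
Since `P` is finite, walk costs with nonnegative weights form a well-ordered set, so every
shortest-path distance is attained. Distinct points are at positive `p`-distance, so a 1-spanner
`E` of the `p`-power metric connects all of `P`, and for each pair `u, v ∈ P` it contains a walk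
of `p`-cost at most `‖u - v‖ ^ p`. Superadditivity of `t ↦ t ^ (q / p)` turns this into a walk of
`q`-cost at most `‖u - v‖ ^ q`. Replacing every step of a walk in `P` by such a spanner walk shows
that spanner `q`-distances are at most `d_q`; the reverse inequality holds because walks in `E`
are walks in `P`.
-/

open scoped BigOperators

noncomputable section

/-- Points of `ℝ^d`. -/
abbrev Pt (d : ℕ) : Type := EuclideanSpace ℝ (Fin d)

/-- The `p`-power metric on a point set `P ⊆ ℝ^d`: the infimum over finite chains of points of
`P` from `a` to `b` of the sum of `p`-th powers of the Euclidean lengths of the steps. -/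
noncomputable def powerMetric {d : ℕ} (P : Set (Pt d)) (p : ℝ) (a b : Pt d) : ℝ :=
  sInf {c : ℝ | ∃ (k : ℕ) (q : Fin (k + 1) → Pt d), q 0 = a ∧ q (Fin.last k) = b ∧
    (∀ i, q i ∈ P) ∧ c = ∑ i : Fin k, ‖q i.succ - q i.castSucc‖ ^ p}

/-- Shortest-path distance in the graph whose (undirected) edges are the pairs in `E`, with edge
weights `w`. -/
noncomputable def spanDist {d : ℕ} (E : Set (Pt d × Pt d)) (w : Pt d → Pt d → ℝ)
    (a b : Pt d) : ℝ :=
  sInf {c : ℝ | ∃ (k : ℕ) (q : Fin (k + 1) → Pt d), q 0 = a ∧ q (Fin.last k) = b ∧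
    (∀ i : Fin k, (q i.castSucc, q i.succ) ∈ E ∨ (q i.succ, q i.castSucc) ∈ E) ∧
    c = ∑ i : Fin k, w (q i.castSucc) (q i.succ)}

open Function

section Walks

variable {α : Type*}

/-- A walk is recorded by its list of steps `(x, y)`; each step uses an edge of `E` in either
direction. -/
inductive IsWalk (E : Set (α × α)) : α → α → List (α × α) → Prop
  | nil (a : α) : IsWalk E a a []
  | cons {a b c : α} {s : List (α × α)} :
      (a, b) ∈ E ∨ (b, a) ∈ E → IsWalk E b c s → IsWalk E a c ((a, b) :: s)

def walkCost (w : α → α → ℝ) (s : List (α × α)) : ℝ := (s.map (uncurry w)).sum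

/-- This is `0` when no walk from `a` to `b` exists (`sInf ∅ = 0`). -/
def walkDist (E : Set (α × α)) (w : α → α → ℝ) (a b : α) : ℝ :=
  sInf (walkCost w '' {s | IsWalk E a b s})

variable {E E' : Set (α × α)} {w : α → α → ℝ} {a b c : α} {s t : List (α × α)}

namespace IsWalk

theorem single (h : (a, b) ∈ E ∨ (b, a) ∈ E) : IsWalk E a b [(a, b)] :=
  cons h (nil b)

theorem append (hs : IsWalk E a b s) (ht : IsWalk E b c t) : IsWalk E a c (s ++ t) := by
  induction hs with
  | nil => exact ht
  | cons hab _ ih => exact cons hab (ih ht)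

theorem mono (h : E ⊆ E') (hs : IsWalk E a b s) : IsWalk E' a b s := by
  induction hs with
  | nil x => exact nil x
  | cons hab _ ih => exact cons (hab.imp (@h _) (@h _)) ih

theorem mem_or_swap_mem (hs : IsWalk E a b s) : ∀ e ∈ s, e ∈ E ∨ e.swap ∈ E := by
  induction hs with
  | nil => simp
  | cons hab _ ih => simpa [hab] using ih

end IsWalk

@[simp] theorem walkCost_nil : walkCost w [] = 0 := rfl

@[simp] theorem walkCost_cons : walkCost w ((a, b) :: s) = w a b + walkCost w s := rfl

@[simp] theorem walkCost_append : walkCost w (s ++ t) = walkCost w s + walkCost w t := by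
  simp [walkCost]

theorem walkCost_nonneg (hw : ∀ x y, 0 ≤ w x y) (s : List (α × α)) : 0 ≤ walkCost w s :=
  List.sum_nonneg fun x hx => by
    obtain ⟨e, -, rfl⟩ := List.mem_map.mp hx
    exact hw _ _

theorem walkDist_le_walkCost (hw : ∀ x y, 0 ≤ w x y) (hs : IsWalk E a b s) :
    walkDist E w a b ≤ walkCost w s :=
  csInf_le ⟨0, by rintro _ ⟨t, -, rfl⟩; exact walkCost_nonneg hw t⟩ ⟨s, hs, rfl⟩

theorem walkDist_le_weight (hw : ∀ x y, 0 ≤ w x y) (h : (a, b) ∈ E ∨ (b, a) ∈ E) :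
    walkDist E w a b ≤ w a b := by
  simpa using walkDist_le_walkCost hw (IsWalk.single h)

theorem exists_isWalk_of_walkDist_ne_zero (h : walkDist E w a b ≠ 0) : ∃ s, IsWalk E a b s := by
  by_contra! hempty
  exact h (by simp [walkDist, hempty])

/-- On a finite edge set, walk costs lie in the additive monoid generated by finitely many
nonnegative weights, which is well ordered; hence the infimum is attained. -/
theorem exists_walkCost_eq_walkDist (hE : E.Finite) (hw : ∀ x y, 0 ≤ w x y)
    (hab : ∃ s, IsWalk E a b s) : ∃ s, IsWalk E a b s ∧ walkCost w s = walkDist E w a b := by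
  set W := uncurry w '' (E ∪ Prod.swap ⁻¹' E)
  have hcosts : walkCost w '' {s | IsWalk E a b s} ⊆ AddSubmonoid.closure W := by
    rintro _ ⟨s, hs, rfl⟩
    refine (AddSubmonoid.closure W).list_sum_mem fun x hx => AddSubmonoid.subset_closure ?_
    obtain ⟨e, he, rfl⟩ := List.mem_map.mp hx
    exact ⟨e, hs.mem_or_swap_mem e he, rfl⟩
  have hWF : (walkCost w '' {s | IsWalk E a b s}).IsWF :=
    (((hE.union (hE.preimage Prod.swap_injective.injOn)).image _).isPWO.addSubmonoid_closure
      (by rintro _ ⟨e, -, rfl⟩; exact hw _ _) |>.mono hcosts).isWF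
  have hne : (walkCost w '' {s | IsWalk E a b s}).Nonempty := Set.Nonempty.image _ hab
  obtain ⟨s, hs, hmin⟩ := hWF.min_mem hne
  refine ⟨s, hs, le_antisymm ?_ (walkDist_le_walkCost hw hs)⟩
  rw [hmin]
  exact le_csInf hne fun c hc => hWF.min_le hne hc

theorem eq_of_walkCost_eq_zero (hw : ∀ x y, 0 ≤ w x y) (hw₀ : ∀ x y, w x y = 0 → x = y)
    (hs : IsWalk E a b s) (h : walkCost w s = 0) : a = b := by
  induction hs with
  | nil => rfl
  | @cons x y _ s _ _ ih =>
    rw [walkCost_cons] at h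
    have hxy := (add_eq_zero_iff_of_nonneg (hw x y) (walkCost_nonneg hw s)).mp h
    rw [hw₀ x y hxy.1]
    exact ih hxy.2

theorem walkDist_pos (hE : E.Finite) (hw : ∀ x y, 0 ≤ w x y) (hw₀ : ∀ x y, w x y = 0 → x = y)
    (hne : a ≠ b) (hab : ∃ s, IsWalk E a b s) : 0 < walkDist E w a b := by
  obtain ⟨s, hs, hcost⟩ := exists_walkCost_eq_walkDist hE hw hab
  rw [← hcost]
  exact (walkCost_nonneg hw s).lt_of_ne fun h => hne (eq_of_walkCost_eq_zero hw hw₀ hs h.symm)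

theorem exists_isWalk_of_walkDist_eq (hE' : E'.Finite) (hw : ∀ x y, 0 ≤ w x y)
    (hw₀ : ∀ x y, w x y = 0 → x = y) (hab : ∃ s, IsWalk E' a b s)
    (h : walkDist E w a b = walkDist E' w a b) : ∃ s, IsWalk E a b s := by
  rcases eq_or_ne a b with rfl | hne
  · exact ⟨[], .nil a⟩
  · exact exists_isWalk_of_walkDist_ne_zero (h ▸ (walkDist_pos hE' hw hw₀ hne hab).ne')

theorem IsWalk.exists_walkCost_le
    (hE : ∀ u v, (u, v) ∈ E' ∨ (v, u) ∈ E' → ∃ t, IsWalk E u v t ∧ walkCost w t ≤ w u v)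
    (hs : IsWalk E' a b s) : ∃ t, IsWalk E a b t ∧ walkCost w t ≤ walkCost w s := by
  induction hs with
  | nil x => exact ⟨[], .nil x, le_rfl⟩
  | @cons x y _ _ hxy _ ih =>
    obtain ⟨t₁, ht₁, hc₁⟩ := hE x y hxy
    obtain ⟨t₂, ht₂, hc₂⟩ := ih
    exact ⟨t₁ ++ t₂, ht₁.append ht₂, by rw [walkCost_append, walkCost_cons]; linarith⟩

theorem walkDist_le_walkDist_of_forall_adj (hw : ∀ x y, 0 ≤ w x y)
    (hE : ∀ u v, (u, v) ∈ E' ∨ (v, u) ∈ E' → ∃ t, IsWalk E u v t ∧ walkCost w t ≤ w u v)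
    (hab : ∃ s, IsWalk E' a b s) : walkDist E w a b ≤ walkDist E' w a b := by
  refine le_csInf (Set.Nonempty.image _ hab) ?_
  rintro _ ⟨s, hs, rfl⟩
  obtain ⟨t, ht, hcost⟩ := hs.exists_walkCost_le hE
  exact (walkDist_le_walkCost hw ht).trans hcost

theorem walkDist_anti (hw : ∀ x y, 0 ≤ w x y) (h : E ⊆ E') (hab : ∃ s, IsWalk E a b s) :
    walkDist E' w a b ≤ walkDist E w a b := by
  refine le_csInf (Set.Nonempty.image _ hab) ?_
  rintro _ ⟨s, hs, rfl⟩
  exact walkDist_le_walkCost hw (hs.mono h)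

end Walks

section FinChains

variable {α : Type*} {E : Set (α × α)} {w : α → α → ℝ} {a b : α}

theorem isWalk_ofFn {k : ℕ} {q : Fin (k + 1) → α}
    (hq : ∀ i : Fin k, (q i.castSucc, q i.succ) ∈ E ∨ (q i.succ, q i.castSucc) ∈ E) :
    IsWalk E (q 0) (q (Fin.last k)) (List.ofFn fun i : Fin k => (q i.castSucc, q i.succ)) := by
  induction k with
  | zero => exact .nil _
  | succ k ih =>
    rw [List.ofFn_succ]
    refine .cons (hq 0) ?_
    simpa using ih (q := fun i => q i.succ) fun i => by simpa using hq i.succ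

theorem IsWalk.exists_ofFn {s : List (α × α)} (hs : IsWalk E a b s) :
    ∃ (k : ℕ) (q : Fin (k + 1) → α), q 0 = a ∧ q (Fin.last k) = b ∧
      (∀ i : Fin k, (q i.castSucc, q i.succ) ∈ E ∨ (q i.succ, q i.castSucc) ∈ E) ∧
      s = List.ofFn fun i : Fin k => (q i.castSucc, q i.succ) := by
  induction hs with
  | nil x => exact ⟨0, fun _ => x, rfl, rfl, Fin.elim0, rfl⟩
  | @cons x _ _ _ hxy _ ih =>
    obtain ⟨k, q, rfl, rfl, hq, rfl⟩ := ih
    refine ⟨k + 1, Fin.cons x q, rfl, by simp [← Fin.succ_last], ?_, ?_⟩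
    · refine Fin.cases (by simpa using hxy) fun i => ?_
      simpa [← Fin.succ_castSucc] using hq i
    · simp [List.ofFn_succ]

theorem walkCost_ofFn {k : ℕ} (q : Fin (k + 1) → α) :
    walkCost w (List.ofFn fun i : Fin k => (q i.castSucc, q i.succ)) =
      ∑ i : Fin k, w (q i.castSucc) (q i.succ) := by
  simp [walkCost, List.sum_ofFn]

theorem setOf_chainCost_eq_image_walkCost :
    {c : ℝ | ∃ (k : ℕ) (q : Fin (k + 1) → α), q 0 = a ∧ q (Fin.last k) = b ∧
      (∀ i : Fin k, (q i.castSucc, q i.succ) ∈ E ∨ (q i.succ, q i.castSucc) ∈ E) ∧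
      c = ∑ i : Fin k, w (q i.castSucc) (q i.succ)} = walkCost w '' {s | IsWalk E a b s} := by
  ext c
  constructor
  · rintro ⟨k, q, rfl, rfl, hq, rfl⟩
    exact ⟨_, isWalk_ofFn hq, walkCost_ofFn q⟩
  · rintro ⟨s, hs, rfl⟩
    obtain ⟨k, q, h0, hlast, hq, rfl⟩ := hs.exists_ofFn
    exact ⟨k, q, h0, hlast, hq, walkCost_ofFn q⟩

end FinChains

theorem spanDist_eq_walkDist {d : ℕ} (E : Set (Pt d × Pt d)) (w : Pt d → Pt d → ℝ)
    (a b : Pt d) : spanDist E w a b = walkDist E w a b :=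
  congrArg sInf setOf_chainCost_eq_image_walkCost

theorem powerMetric_eq_spanDist {d : ℕ} {P : Set (Pt d)} (p : ℝ) {a : Pt d} (ha : a ∈ P)
    (b : Pt d) : powerMetric P p a b = spanDist (P ×ˢ P) (fun u v => ‖u - v‖ ^ p) a b := by
  refine congrArg sInf (Set.ext fun c => exists_congr fun k => exists_congr fun q => ?_)
  have hsum : ∑ i : Fin k, ‖q i.succ - q i.castSucc‖ ^ p =
      ∑ i : Fin k, ‖q i.castSucc - q i.succ‖ ^ p :=
    Finset.sum_congr rfl fun i _ => by rw [norm_sub_rev]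
  simp only [Set.mem_prod, hsum]
  constructor
  · rintro ⟨h0, hlast, hP, hc⟩
    exact ⟨h0, hlast, fun i => .inl ⟨hP _, hP _⟩, hc⟩
  · rintro ⟨rfl, hlast, hP, hc⟩
    exact ⟨rfl, hlast, Fin.cases ha fun i => (hP i).elim And.right And.left, hc⟩

section Powers

variable {α : Type*} {E : Set (α × α)} {δ : α → α → ℝ} {p q : ℝ} {a b : α}

theorem rpow_eq_rpow_rpow_div {x : ℝ} (hx : 0 ≤ x) (hp : 0 < p) : x ^ q = (x ^ p) ^ (q / p) := by
  rw [← Real.rpow_mul hx, mul_div_cancel₀ _ hp.ne']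

/-- For `r = q / p ≥ 1`, `t ↦ t ^ r` is superadditive on `[0, ∞)`. -/
theorem walkCost_rpow_le (hδ : ∀ x y, 0 ≤ δ x y) (hp : 0 < p) (hpq : p ≤ q)
    (s : List (α × α)) :
    walkCost (fun x y => δ x y ^ q) s ≤ walkCost (fun x y => δ x y ^ p) s ^ (q / p) := by
  have hr : 1 ≤ q / p := (one_le_div hp).mpr hpq
  induction s with
  | nil => simp [Real.zero_rpow (by positivity : q / p ≠ 0)]
  | cons e s ih =>
    obtain ⟨x, y⟩ := e
    have hs := walkCost_nonneg (fun x y => Real.rpow_nonneg (hδ x y) p) s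
    calc δ x y ^ q + walkCost (fun x y => δ x y ^ q) s
        ≤ (δ x y ^ p) ^ (q / p) + walkCost (fun x y => δ x y ^ p) s ^ (q / p) := by
          rw [rpow_eq_rpow_rpow_div (hδ x y) hp]
          exact add_le_add_right ih _
      _ ≤ (δ x y ^ p + walkCost (fun x y => δ x y ^ p) s) ^ (q / p) :=
          Real.add_rpow_le_rpow_add (Real.rpow_nonneg (hδ x y) p) hs hr

theorem exists_isWalk_walkCost_rpow_le (hE : E.Finite) (hδ : ∀ x y, 0 ≤ δ x y) (hp : 0 < p)
    (hpq : p ≤ q) (hab : ∃ s, IsWalk E a b s)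
    (h : walkDist E (fun x y => δ x y ^ p) a b ≤ δ a b ^ p) :
    ∃ t, IsWalk E a b t ∧ walkCost (fun x y => δ x y ^ q) t ≤ δ a b ^ q := by
  obtain ⟨t, ht, hcost⟩ :=
    exists_walkCost_eq_walkDist hE (fun x y => Real.rpow_nonneg (hδ x y) p) hab
  refine ⟨t, ht, ?_⟩
  calc walkCost (fun x y => δ x y ^ q) t
      ≤ walkCost (fun x y => δ x y ^ p) t ^ (q / p) := walkCost_rpow_le hδ hp hpq t
    _ ≤ (δ a b ^ p) ^ (q / p) :=
        Real.rpow_le_rpow (walkCost_nonneg (fun x y => Real.rpow_nonneg (hδ x y) p) t)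
          (hcost ▸ h) (div_pos (hp.trans_le hpq) hp).le
    _ = δ a b ^ q := (rpow_eq_rpow_rpow_div (hδ a b) hp).symm

theorem walkDist_rpow_eq_of_forall_adj {F : Set (α × α)} (hF : F.Finite) (hEF : E ⊆ F)
    (hδ : ∀ x y, 0 ≤ δ x y) (hδ₀ : ∀ x y, δ x y = 0 → x = y) (hp : 0 < p) (hpq : p ≤ q)
    (hspan : ∀ u v, (u, v) ∈ F ∨ (v, u) ∈ F →
      walkDist E (fun x y => δ x y ^ p) u v = walkDist F (fun x y => δ x y ^ p) u v)
    (hab : (a, b) ∈ F ∨ (b, a) ∈ F) :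
    walkDist E (fun x y => δ x y ^ q) a b = walkDist F (fun x y => δ x y ^ q) a b := by
  have hw (r : ℝ) (x y : α) : 0 ≤ δ x y ^ r := Real.rpow_nonneg (hδ x y) r
  have hw₀ (x y : α) (h : δ x y ^ p = 0) : x = y :=
    hδ₀ x y ((Real.rpow_eq_zero (hδ x y) hp.ne').mp h)
  have hreach (u v : α) (huv : (u, v) ∈ F ∨ (v, u) ∈ F) : ∃ s, IsWalk E u v s :=
    exists_isWalk_of_walkDist_eq hF (hw p) hw₀ ⟨_, .single huv⟩ (hspan u v huv)
  have hedge (u v : α) (huv : (u, v) ∈ F ∨ (v, u) ∈ F) :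
      ∃ t, IsWalk E u v t ∧ walkCost (fun x y => δ x y ^ q) t ≤ δ u v ^ q :=
    exists_isWalk_walkCost_rpow_le (hF.subset hEF) hδ hp hpq (hreach u v huv)
      ((hspan u v huv).trans_le (walkDist_le_weight (hw p) huv))
  exact le_antisymm (walkDist_le_walkDist_of_forall_adj (hw q) hedge ⟨_, .single hab⟩)
    (walkDist_anti (hw q) hEF (hreach a b hab))

end Powers

/-- For `0 < p < q` and a finite `P ⊆ ℝ^d`: any 1-spanner of the `p`-power
metric on `P` is a 1-spanner of the `q`-power metric on `P`. -/
theorem one_spanner_power_monotone (d : ℕ) (P : Set (Pt d)) (hP : P.Finite)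
    (p q : ℝ) (hp : 0 < p) (hpq : p < q)
    (E : Set (Pt d × Pt d)) (hE : ∀ e ∈ E, e.1 ∈ P ∧ e.2 ∈ P)
    (hspan : ∀ a ∈ P, ∀ b ∈ P,
      spanDist E (fun u v => ‖u - v‖ ^ p) a b = powerMetric P p a b) :
    ∀ a ∈ P, ∀ b ∈ P,
      spanDist E (fun u v => ‖u - v‖ ^ q) a b = powerMetric P q a b := by
  have hspan' : ∀ u v, (u, v) ∈ P ×ˢ P ∨ (v, u) ∈ P ×ˢ P →
      walkDist E (fun x y => ‖x - y‖ ^ p) u v =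
        walkDist (P ×ˢ P) (fun x y => ‖x - y‖ ^ p) u v := by
    rintro u v (⟨hu, hv⟩ | ⟨hv, hu⟩) <;>
      rw [← spanDist_eq_walkDist, hspan u hu v hv, powerMetric_eq_spanDist p hu,
        spanDist_eq_walkDist]
  intro a ha b hb
  rw [spanDist_eq_walkDist, powerMetric_eq_spanDist q ha, spanDist_eq_walkDist]
  exact walkDist_rpow_eq_of_forall_adj (δ := fun u v => ‖u - v‖) (hP.prod hP) hE
    (fun _ _ => norm_nonneg _) (fun _ _ h => sub_eq_zero.mp (norm_eq_zero.mp h)) hp hpq.le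
    hspan' (.inl ⟨ha, hb⟩)
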